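/- The four permutations ι_1 = (1,11)(2,22)(4,20)(7,12)(8,17)(10,18)(13,21)(14,16), ι_2 = (1,13)(2,12)(4,14)(7,22)(8,10)(11,21)(16,20)(17,18), ι_3 = (1,14)(2,17)(4,13)(7,10)(8,22)(11,16)(12,18)(20,21), ι_4 = (1,17)(2,14)(4,12)(7,20)(8,11)(10,21)(13,18)(16,22) of {1,...,24} are automorphisms of the extended binary Golay code, commute pairwise, each have order 2, and generate a subgroup isomorphic to (Z/2)^4 that fixes every point of the octad {3,5,6,9,15,19,23,24}. -/

import Mathlib

/-!
Each `ι k` is checked on the twelve spanning codewords of `golayCode`: the image of each is the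
sum of the spanning codewords listed in `golayPermCoords`, so `ι k` preserves their span.
Commuting involutions generate the image of `(ℤ/2)⁴ → S₂₄`, `f ↦ ∏ ι k ^ f k`; this map is
injective because already its orbit map at the point `1` is: the group acts regularly on the
sixteen points outside `𝒪₉`.
-/

/-- The indicator vector in `𝔽₂²⁴` of a set of labels in `{1,…,24}`
(coordinate `i : Fin 24` carries the label `i+1`). -/
def indic (s : Finset ℕ) : Fin 24 → ZMod 2 := fun i => if (i : ℕ) + 1 ∈ s then 1 else 0

/-- An explicit basis of the extended binary Golay code, given by the support sets
of nine octads and three dodecads. -/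
def golayBasisSets : Fin 12 → Finset ℕ :=
  ![{1,2,16,18,5,12,22,3}, {7,4,19,10,12,15,8,16}, {23,3,9,19,13,18,8,11},
    {6,3,22,4,21,17,15,9}, {20,10,11,17,14,13,22,12}, {24,2,10,19,9,5,14,21},
    {8,7,15,17,11,23,18,16}, {16,1,2,21,4,7,8,18}, {18,1,16,8,23,13,14,5},
    {8,7,15,9,19,23,4,22,13,18,1,16}, {18,23,13,22,3,1,11,10,2,16,7,8},
    {16,1,2,10,12,7,5,9,15,8,23,18}]

/-- The extended binary Golay code `𝒢₂₄ ⊂ 𝔽₂²⁴`. -/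
def golayCode : Submodule (ZMod 2) (Fin 24 → ZMod 2) :=
  Submodule.span (ZMod 2) (Set.range fun i => indic (golayBasisSets i))

/-- The weight of a vector in `𝔽₂²⁴`: the number of nonzero coordinates. -/
def weight (v : Fin 24 → ZMod 2) : ℕ := (Finset.univ.filter fun i => v i ≠ 0).card

/-- The special octad `𝒪₉ = {3,5,6,9,15,19,23,24}`. -/
def O9 : Finset ℕ := {3, 5, 6, 9, 15, 19, 23, 24}

/-- The four involutions `ι₁, …, ι₄` of `{1,…,24}` (coordinates zero-based: the
coordinate `i : Fin 24` carries the label `i+1`):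
`ι₁ = (1,11)(2,22)(4,20)(7,12)(8,17)(10,18)(13,21)(14,16)`, etc. -/
def ι : Fin 4 → Equiv.Perm (Fin 24) :=
  ![Equiv.swap 0 10 * Equiv.swap 1 21 * Equiv.swap 3 19 * Equiv.swap 6 11 *
      Equiv.swap 7 16 * Equiv.swap 9 17 * Equiv.swap 12 20 * Equiv.swap 13 15,
    Equiv.swap 0 12 * Equiv.swap 1 11 * Equiv.swap 3 13 * Equiv.swap 6 21 *
      Equiv.swap 7 9 * Equiv.swap 10 20 * Equiv.swap 15 19 * Equiv.swap 16 17,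
    Equiv.swap 0 13 * Equiv.swap 1 16 * Equiv.swap 3 12 * Equiv.swap 6 9 *
      Equiv.swap 7 21 * Equiv.swap 10 15 * Equiv.swap 11 17 * Equiv.swap 19 20,
    Equiv.swap 0 16 * Equiv.swap 1 13 * Equiv.swap 3 11 * Equiv.swap 6 19 *
      Equiv.swap 7 10 * Equiv.swap 9 20 * Equiv.swap 12 17 * Equiv.swap 15 21]


open Function

theorem comp_mem_span_of_forall_comp_mem {R α ι : Type*} [Semiring R] {b : ι → α → R}
    {f : α → α} (hb : ∀ i, b i ∘ f ∈ Submodule.span R (Set.range b)) {v : α → R}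
    (hv : v ∈ Submodule.span R (Set.range b)) : v ∘ f ∈ Submodule.span R (Set.range b) := by
  have hle : Submodule.span R (Set.range b) ≤
      (Submodule.span R (Set.range b)).comap (LinearMap.funLeft R R f) :=
    Submodule.span_le.2 (Set.range_subset_iff.2 hb)
  exact hle hv

section ZModPowers

variable {G : Type*} [Group G] {n : ℕ} [NeZero n]

def zmodPowersHom {g : G} (hg : g ^ n = 1) : Multiplicative (ZMod n) →* G where
  toFun a := g ^ (Multiplicative.toAdd a).val
  map_one' := by rw [toAdd_one, ZMod.val_zero, pow_zero]
  map_mul' a b := by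
    rw [toAdd_mul, ZMod.val_add, ← pow_eq_pow_mod _ hg, pow_add]

theorem range_zmodPowersHom {g : G} (hg : g ^ n = 1) :
    (zmodPowersHom hg).range = Subgroup.zpowers g := by
  refine le_antisymm ?_ (Subgroup.zpowers_le.2 ⟨Multiplicative.ofAdd 1, ?_⟩)
  · rintro _ ⟨a, rfl⟩
    exact Subgroup.npow_mem_zpowers g _
  · change g ^ (1 : ZMod n).val = g
    rw [ZMod.val_one_eq_one_mod, ← pow_eq_pow_mod _ hg, pow_one]

variable {ι : Type*} [Fintype ι] {g : ι → G}

def piZModPowersHom (hg : ∀ i, g i ^ n = 1) (hcomm : Pairwise fun i j => Commute (g i) (g j)) :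
    (ι → Multiplicative (ZMod n)) →* G :=
  MonoidHom.noncommPiCoprod (fun i => zmodPowersHom (hg i))
    fun _ _ hij _ _ => (hcomm hij).pow_pow _ _

theorem range_piZModPowersHom (hg : ∀ i, g i ^ n = 1)
    (hcomm : Pairwise fun i j => Commute (g i) (g j)) :
    (piZModPowersHom hg hcomm).range = Subgroup.closure (Set.range g) := by
  refine (MonoidHom.noncommPiCoprod_range (fun i => zmodPowersHom (hg i))).trans ?_
  rw [← Set.iUnion_singleton_eq_range, Subgroup.closure_iUnion]
  simp only [range_zmodPowersHom, Subgroup.zpowers_eq_closure]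

theorem nonempty_closure_range_mulEquiv_pi_zmod (hg : ∀ i, g i ^ n = 1)
    (hcomm : Pairwise fun i j => Commute (g i) (g j))
    (hinj : Injective (piZModPowersHom hg hcomm)) :
    Nonempty (Subgroup.closure (Set.range g) ≃* (ι → Multiplicative (ZMod n))) :=
  ⟨(MulEquiv.subgroupCongr (range_piZModPowersHom hg hcomm).symm).trans
    (MonoidHom.ofInjective hinj).symm⟩

end ZModPowers

-- Coordinates of the permuted spanning codewords, found by Gaussian elimination over `𝔽₂`.
def golayPermCoords : Fin 4 → Fin 12 → Finset (Fin 12) :=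
  ![![{8, 10}, {0, 2, 4, 11}, {6, 7, 9, 10}, {0, 3, 4, 7, 8, 10}, {7}, {1, 2, 5, 7, 8, 10, 11},
      {0, 6, 8, 10}, {4}, {2, 6, 7, 8, 9, 10}, {4, 7, 9}, {0, 2, 6, 7, 8, 9, 10}, {1, 6, 8, 9}],
    ![{4, 8, 10}, {1, 2, 4, 6, 9, 10}, {6, 7, 9, 10}, {1, 3, 6, 7, 8, 9, 11}, {7}, {0, 5, 7, 8, 10},
      {0, 2, 4, 7, 8, 9}, {4}, {0, 1, 2, 4, 8, 11}, {0, 1, 2, 4, 9, 11}, {1, 2, 4, 7, 8, 11},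
      {0, 4, 8, 10, 11}],
    ![{0, 1, 6, 8, 9, 11}, {0, 2, 11}, {0, 1, 11}, {0, 3, 4, 7, 8, 10}, {7}, {0, 1, 2, 4, 5, 7, 11},
      {0, 1, 9, 10, 11}, {4}, {0, 1, 2, 8, 11}, {0, 8, 9, 10}, {0, 2, 6, 8, 9, 10}, {1, 6, 8, 9}],
    ![{2, 6, 8, 9}, {0, 1, 2, 4, 6, 7, 8, 9}, {2}, {0, 1, 3, 6, 7, 9, 10, 11}, {7}, {5},
      {0, 4, 6, 8, 10}, {4}, {1, 6, 9, 11}, {1, 2, 4, 8, 9, 10, 11}, {0, 1, 2, 4, 7, 10, 11},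
      {4, 7, 11}]]

set_option maxHeartbeats 4000000 in
theorem indic_golayBasisSets_comp_ι (k : Fin 4) (i : Fin 12) :
    indic (golayBasisSets i) ∘ ι k = ∑ j ∈ golayPermCoords k i, indic (golayBasisSets j) := by
  revert k i
  decide

theorem indic_golayBasisSets_comp_ι_mem (k : Fin 4) (i : Fin 12) :
    indic (golayBasisSets i) ∘ ι k ∈ golayCode := by
  rw [indic_golayBasisSets_comp_ι]
  exact Submodule.sum_mem _ fun j _ => Submodule.subset_span ⟨j, rfl⟩

theorem ι_mul_comm : ∀ k l, ι k * ι l = ι l * ι k := by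
  decide

theorem ι_sq : ∀ k, ι k ^ 2 = 1 := by
  decide

theorem ι_ne_one : ∀ k, ι k ≠ 1 := by
  decide

theorem ι_apply_of_mem_O9 : ∀ (k : Fin 4) (n : Fin 24), (n : ℕ) + 1 ∈ O9 → ι k n = n := by
  decide

def ιHom : (Fin 4 → Multiplicative (ZMod 2)) →* Equiv.Perm (Fin 24) :=
  piZModPowersHom ι_sq fun k l _ => ι_mul_comm k l

set_option maxRecDepth 100000 in
theorem ιHom_apply_zero_injective : Injective fun f => ιHom f 0 := by
  decide

theorem iota_translations :
    (∀ k : Fin 4, ∀ v ∈ golayCode, v ∘ ⇑(ι k) ∈ golayCode) ∧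
    (∀ k l : Fin 4, ι k * ι l = ι l * ι k) ∧
    (∀ k : Fin 4, orderOf (ι k) = 2) ∧
    Nonempty (Subgroup.closure (Set.range ι) ≃* (Fin 4 → Multiplicative (ZMod 2))) ∧
    (∀ k : Fin 4, ∀ n : Fin 24, (n : ℕ) + 1 ∈ O9 → ι k n = n) :=
  ⟨fun k _ hv => comp_mem_span_of_forall_comp_mem (indic_golayBasisSets_comp_ι_mem k) hv,
    ι_mul_comm,
    fun k => orderOf_eq_prime (ι_sq k) (ι_ne_one k),
    nonempty_closure_range_mulEquiv_pi_zmod ι_sq _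
      (Injective.of_comp (f := fun σ : Equiv.Perm (Fin 24) => σ 0) ιHom_apply_zero_injective),
    ι_apply_of_mem_O9⟩
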